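/- Let P be a row-stochastic matrix on a finite set S whose closed communicating classes are exactly C_1, …, C_m (m ≥ 1), and let Q be any row-stochastic matrix on S. Then for every v ∈ S and every arborescence a rooted at v, there are at least m−1 elements j ∈ S ∖ {v} with P(j, a(j)) = 0 (namely, for every closed communicating class C_k with v ∉ C_k there is some j ∈ C_k whose edge leaves C_k). Consequently, for every ε ∈ (0,1) the weight of a with respect to P_ε := (1−ε)P + εQ satisfies |a|_{P_ε} ≤ ε^{m−1}. -/

import Mathlib

open Filter Topology

/-- A matrix is row-stochastic: nonnegative entries and each row sums to 1. -/
def RowStochastic {S : Type*} [Fintype S] (P : Matrix S S ℝ) : Prop :=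
  (∀ i j, 0 ≤ P i j) ∧ ∀ i, ∑ j, P i j = 1

/-- A closed communicating class: a nonempty set which no transition leaves, and
within which every state leads to every other in some number `k ≥ 1` of steps. -/
def ClosedClass {S : Type*} [Fintype S] [DecidableEq S] (P : Matrix S S ℝ) (C : Set S) : Prop :=
  C.Nonempty ∧ (∀ i ∈ C, ∀ j, j ∉ C → P i j = 0) ∧
    ∀ i ∈ C, ∀ j ∈ C, ∃ k, 1 ≤ k ∧ 0 < (P ^ k) i j

/-- An arborescence rooted at `root`, encoded as a map `f : S → S` fixing the root
(so that the partial map on `S \ {root}` is pinned down) such that iterates of `f`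
from every state reach the root. -/
def IsArb {S : Type*} (root : S) (f : S → S) : Prop :=
  f root = root ∧ ∀ j, ∃ k, f^[k] j = root

/-- The weight of an arborescence with respect to a matrix `R`:
the product of the weights of its edges `(j, f j)`, `j ≠ root`. -/
def arbWeight {S : Type*} [Fintype S] [DecidableEq S]
    (R : Matrix S S ℝ) (root : S) (f : S → S) : ℝ :=
  ∏ j ∈ Finset.univ.erase root, R j (f j)

/-! Every arborescence leaves each closed class that does not contain its root; the edge
by which it leaves has `P`-weight zero, and distinct closed classes are disjoint, so at
least `m - 1` edges have `P`-weight zero. Each of them has `P_ε`-weight at most `ε`, and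
every other edge has `P_ε`-weight at most `1`. -/

open Finset Function

section Combinatorics

variable {S : Type*}

theorem Finset.card_sub_one_le_card_of_pairwise_disjoint {ι : Type*} [Fintype ι]
    {C : ι → Finset S} (hC : Pairwise (Disjoint on C)) (v : S) {T : Finset S}
    (hT : ∀ k, v ∉ C k → ∃ w ∈ C k, w ∈ T) :
    Fintype.card ι - 1 ≤ #T := by
  classical
  have hv : #{k | v ∈ C k} ≤ 1 := card_le_one.2 fun k hk l hl => by
    by_contra hkl
    exact disjoint_left.1 (hC hkl) (mem_filter.1 hk).2 (mem_filter.1 hl).2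
  have hsplit := card_filter_add_card_filter_not (s := univ) (fun k : ι => v ∈ C k)
  have hmiss : #{k | v ∉ C k} ≤ #T :=
    card_le_card_of_forall_subsingleton (fun k w => w ∈ C k)
      (fun k hk => by simpa [and_comm] using hT k (mem_filter.1 hk).2)
      (fun w _ k hk l hl => by
        by_contra hkl
        exact disjoint_left.1 (hC hkl) hk.2 hl.2)
  rw [card_univ] at hsplit
  omega

theorem IsArb.exists_mem_apply_notMem {v : S} {f : S → S} (hf : IsArb v f) {D : Set S}
    (hD : D.Nonempty) (hv : v ∉ D) : ∃ w ∈ D, f w ∉ D := by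
  obtain ⟨x, hx⟩ := hD
  obtain ⟨n, hn⟩ := hf.2 x
  by_contra! hstay
  exact hv (hn ▸ (Set.MapsTo.iterate hstay n) hx)

end Combinatorics

section Markov

variable {S : Type*} [Fintype S] [DecidableEq S]

theorem Matrix.pow_apply_eq_zero_of_forall_apply_eq_zero {R : Type*} [Semiring R]
    {P : Matrix S S R} {D : Set S} (hD : ∀ i ∈ D, ∀ j, j ∉ D → P i j = 0) (k : ℕ) :
    ∀ i ∈ D, ∀ j, j ∉ D → (P ^ k) i j = 0 := by
  induction k with
  | zero => exact fun i hi j hj => Matrix.one_apply_ne (by rintro rfl; exact hj hi)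
  | succ k ih =>
    intro i hi j hj
    rw [pow_succ, Matrix.mul_apply]
    refine sum_eq_zero fun l _ => ?_
    by_cases hl : l ∈ D
    · rw [hD l hl j hj, mul_zero]
    · rw [ih i hi l hl, zero_mul]

theorem ClosedClass.subset_of_mem {P : Matrix S S ℝ} {A B : Set S} (hA : ClosedClass P A)
    (hB : ∀ i ∈ B, ∀ j, j ∉ B → P i j = 0) {x : S} (hxA : x ∈ A) (hxB : x ∈ B) :
    A ⊆ B := fun j hj => by
  obtain ⟨k, -, hk⟩ := hA.2.2 x hxA j hj
  by_contra hjB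
  exact hk.ne' (Matrix.pow_apply_eq_zero_of_forall_apply_eq_zero hB k x hxB j hjB)

theorem ClosedClass.eq_of_mem {P : Matrix S S ℝ} {A B : Set S} (hA : ClosedClass P A)
    (hB : ClosedClass P B) {x : S} (hxA : x ∈ A) (hxB : x ∈ B) : A = B :=
  (hA.subset_of_mem hB.2.1 hxA hxB).antisymm (hB.subset_of_mem hA.2.1 hxB hxA)

theorem IsArb.exists_apply_eq_zero_of_closedClass {P : Matrix S S ℝ} {v : S} {f : S → S}
    (hf : IsArb v f) {D : Set S} (hD : ClosedClass P D) (hv : v ∉ D) :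
    ∃ w ∈ D, P w (f w) = 0 := by
  obtain ⟨w, hw, hfw⟩ := hf.exists_mem_apply_notMem hD.1 hv
  exact ⟨w, hw, hD.2.1 w hw (f w) hfw⟩

omit [DecidableEq S] in
theorem RowStochastic.apply_le_one {P : Matrix S S ℝ} (hP : RowStochastic P) (i j : S) :
    P i j ≤ 1 :=
  hP.2 i ▸ single_le_sum (fun l _ => hP.1 i l) (mem_univ j)

theorem Finset.prod_le_pow_card_filter {ι : Type*} {s : Finset ι} {g : ι → ℝ}
    {p : ι → Prop} [DecidablePred p] {ε : ℝ} (h0 : ∀ i ∈ s, 0 ≤ g i)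
    (h1 : ∀ i ∈ s, g i ≤ 1) (hε : ∀ i ∈ s, p i → g i ≤ ε) :
    ∏ i ∈ s, g i ≤ ε ^ #(s.filter p) := by
  calc ∏ i ∈ s, g i ≤ ∏ i ∈ s, if p i then ε else 1 :=
        prod_le_prod h0 fun i hi => by split_ifs with h <;> simp_all
    _ = ε ^ #(s.filter p) := by rw [prod_ite, prod_const, prod_const, one_pow, mul_one]

theorem arbWeight_smul_add_smul_le {P Q : Matrix S S ℝ} (hP : RowStochastic P)
    (hQ : RowStochastic Q) {ε : ℝ} (hε₀ : 0 ≤ ε) (hε₁ : ε ≤ 1) (v : S) (f : S → S)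
    [DecidablePred fun j => P j (f j) = 0] :
    arbWeight ((1 - ε) • P + ε • Q) v f ≤
      ε ^ #((univ.erase v).filter fun j => P j (f j) = 0) := by
  refine prod_le_pow_card_filter (fun j _ => ?_) (fun j _ => ?_) (fun j _ hj => ?_) <;>
    simp only [Matrix.add_apply, Matrix.smul_apply, smul_eq_mul]
  · have := hP.1 j (f j); have := hQ.1 j (f j); nlinarith
  · have := hP.apply_le_one j (f j); have := hQ.apply_le_one j (f j); nlinarith
  · have := hQ.apply_le_one j (f j); rw [hj]; nlinarith

end Markov

open Classical in
theorem arborescence_weight_le_eps_pow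
    {S : Type*} [Fintype S] [DecidableEq S]
    (P : Matrix S S ℝ) (hP : RowStochastic P)
    (m : ℕ) (C : Fin m → Finset S)
    (hCcls : ∀ k, ClosedClass P (C k : Set S))
    (hCinj : Function.Injective C)
    (Q : Matrix S S ℝ) (hQ : RowStochastic Q) :
    ∀ v : S, ∀ f : S → S, IsArb v f →
      (m - 1 ≤ ((Finset.univ.erase v).filter (fun j => P j (f j) = 0)).card) ∧
      ∀ ε ∈ Set.Ioo (0 : ℝ) 1,
        arbWeight ((1 - ε) • P + ε • Q) v f ≤ ε ^ (m - 1) := by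
  intro v f hf
  have hdisj : Pairwise (Disjoint on C) := fun k l hkl =>
    disjoint_left.2 fun x hxk hxl => hkl <| hCinj <| coe_injective <|
      (hCcls k).eq_of_mem (hCcls l) (mem_coe.2 hxk) (mem_coe.2 hxl)
  have hcount : m - 1 ≤ #((univ.erase v).filter fun j => P j (f j) = 0) := by
    simpa using card_sub_one_le_card_of_pairwise_disjoint hdisj v fun k hv => by
      obtain ⟨w, hw, hzero⟩ :=
        hf.exists_apply_eq_zero_of_closedClass (hCcls k) (mt mem_coe.1 hv)
      have hwv : w ≠ v := fun hwv => hv (hwv ▸ hw)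
      exact ⟨w, hw, mem_filter.2 ⟨mem_erase.2 ⟨hwv, mem_univ w⟩, hzero⟩⟩
  refine ⟨hcount, fun ε ⟨hε₀, hε₁⟩ => ?_⟩
  exact (arbWeight_smul_add_smul_le hP hQ hε₀.le hε₁.le v f).trans
    (pow_le_pow_of_le_one hε₀.le hε₁.le hcount)
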